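/- Let K be a consistent belief set and let ⊙ be an operator on K satisfying, for all sentences α, β: weak relative success (α ∈ K⊙α or K⊙α ⊆ K), closure (K⊙α = Cn(K⊙α)), inclusion (K⊙α ⊆ K + α), consistency preservation (if K is consistent then K⊙α is consistent), vacuity (if ¬α ∉ K then K + α ⊆ K⊙α), extensionality (if ⊢ α ↔ β then K⊙α = K⊙β), strict improvement (if α ∈ K⊙α and ⊢ α → β then β ∈ K⊙β), N-persistence (if ¬β ∈ K⊙β then ¬β ∈ K⊙α for all α), N-recovery (K ⊆ (K⊙α) + ¬α), disjunctive overlap (K⊙α ∩ K⊙β ⊆ K⊙(α ∨ β)) and disjunctive inclusion (if ¬α ∉ K⊙(α ∨ β) then K⊙(α ∨ β) ⊆ K⊙α). Let 𝕊 be the collection of all sets S of possible worlds such that either S = ‖K‖, or (∅ ≠ S ⊆ {w : w ∈ ‖K⊙α‖ for some α with ‖K⊙α‖ ∩ ‖α‖ ≠ ∅}, ‖K⊙α‖ ⊆ S for every α with S ∩ ‖α‖ ≠ ∅, and for every α with S ∩ ‖α‖ = ∅, if S ∉ 𝕊_i then ‖K⊙α‖ ∩ S = ‖K‖), where 𝕊_i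 is the collection of all sets S of possible worlds such that either S = ‖K‖, or (∅ ≠ S ⊆ {w : w ∈ ‖K⊙α‖ for some α with ‖K⊙α‖ ⊆ ‖α‖} and ‖K⊙α‖ ⊆ S for every α with S ∩ ‖α‖ ≠ ∅). Then for every sentence α with ¬α ∉ K⊙α, the set S(α) = ⋃{‖K⊙δ‖ : ‖α‖ ⊆ ‖δ‖} belongs to 𝕊, and S(α) is the ⊆-smallest member of 𝕊 that intersects ‖α‖. -/

import Mathlib

/-- A propositional language `L`: a type of sentences closed under the
truth-functional connectives, together with a consequence operator `Cn`
satisfying inclusion, monotony, iteration, supraclassicality, compactness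
and deduction. Supraclassicality is expressed via Boolean valuations that
respect the connectives. -/
structure PropLanguage where
  Sentence : Type
  falsum : Sentence
  neg : Sentence → Sentence
  conj : Sentence → Sentence → Sentence
  disj : Sentence → Sentence → Sentence
  impl : Sentence → Sentence → Sentence
  biimpl : Sentence → Sentence → Sentence
  Cn : Set Sentence → Set Sentence
  cn_inclusion : ∀ A : Set Sentence, A ⊆ Cn A
  cn_monotony : ∀ A B : Set Sentence, A ⊆ B → Cn A ⊆ Cn B
  cn_iteration : ∀ A : Set Sentence, Cn (Cn A) = Cn A
  cn_supraclassical : ∀ (A : Set Sentence) (α : Sentence),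
    (∀ v : Sentence → Bool,
        v falsum = false →
        (∀ β, v (neg β) = !v β) →
        (∀ β γ, v (conj β γ) = (v β && v γ)) →
        (∀ β γ, v (disj β γ) = (v β || v γ)) →
        (∀ β γ, v (impl β γ) = (!v β || v γ)) →
        (∀ β γ, v (biimpl β γ) = (v β == v γ)) →
        (∀ β ∈ A, v β = true) → v α = true) →
    α ∈ Cn A
  cn_compact : ∀ (A : Set Sentence) (α : Sentence), α ∈ Cn A →
    ∃ A' : Set Sentence, A' ⊆ A ∧ A'.Finite ∧ α ∈ Cn A'
  cn_deduction : ∀ (A : Set Sentence) (α β : Sentence),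
    β ∈ Cn (A ∪ {α}) ↔ impl α β ∈ Cn A

namespace PropLanguage

variable (L : PropLanguage)

/-- A set of sentences is consistent iff it does not entail falsum. -/
def Consistent (A : Set L.Sentence) : Prop := L.falsum ∉ L.Cn A

/-- A belief set: a logically closed set of sentences. -/
def IsBeliefSet (K : Set L.Sentence) : Prop := K = L.Cn K

/-- Expansion: `K + α = Cn (K ∪ {α})`. -/
def expand (K : Set L.Sentence) (α : L.Sentence) : Set L.Sentence :=
  L.Cn (K ∪ {α})

/-- A possible world: a maximal consistent set of sentences. -/
def IsWorld (M : Set L.Sentence) : Prop :=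
  L.Consistent M ∧ ∀ M' : Set L.Sentence, L.Consistent M' → M ⊆ M' → M' = M

/-- `‖R‖`: the set of possible worlds containing `R`. -/
def worldsOf (R : Set L.Sentence) : Set (Set L.Sentence) :=
  {M | L.IsWorld M ∧ R ⊆ M}

/-- `‖α‖`: the set of possible worlds containing `Cn {α}`. -/
def wS (α : L.Sentence) : Set (Set L.Sentence) := L.worldsOf (L.Cn {α})

/-- `⋂ X`: the set of sentences belonging to every world in `X`. -/
def th (X : Set (Set L.Sentence)) : Set L.Sentence := {φ | ∀ M ∈ X, φ ∈ M}

/-! ### Postulates for an operator `od` on a belief set `K` -/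

/-- Weak relative success: `α ∈ K⊙α` or `K⊙α ⊆ K`. -/
def WeakRelativeSuccess (K : Set L.Sentence) (od : L.Sentence → Set L.Sentence) : Prop :=
  ∀ α, α ∈ od α ∨ od α ⊆ K

/-- Closure: `K⊙α = Cn (K⊙α)`. -/
def Closure (od : L.Sentence → Set L.Sentence) : Prop :=
  ∀ α, od α = L.Cn (od α)

/-- Inclusion: `K⊙α ⊆ K + α`. -/
def Inclusion (K : Set L.Sentence) (od : L.Sentence → Set L.Sentence) : Prop :=
  ∀ α, od α ⊆ L.expand K α

/-- Consistency preservation: if `K` is consistent then `K⊙α` is consistent. -/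
def ConsistencyPreservation (K : Set L.Sentence) (od : L.Sentence → Set L.Sentence) : Prop :=
  L.Consistent K → ∀ α, L.Consistent (od α)

/-- Vacuity: if `¬α ∉ K` then `K + α ⊆ K⊙α`. -/
def Vacuity (K : Set L.Sentence) (od : L.Sentence → Set L.Sentence) : Prop :=
  ∀ α, L.neg α ∉ K → L.expand K α ⊆ od α

/-- Weak vacuity: if `¬α ∉ K` then `K ⊆ K⊙α`. -/
def WeakVacuity (K : Set L.Sentence) (od : L.Sentence → Set L.Sentence) : Prop :=
  ∀ α, L.neg α ∉ K → K ⊆ od α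

/-- Extensionality: if `⊢ α ↔ β` then `K⊙α = K⊙β`. -/
def Extensionality (od : L.Sentence → Set L.Sentence) : Prop :=
  ∀ α β, L.biimpl α β ∈ L.Cn ∅ → od α = od β

/-- Strict improvement: if `α ∈ K⊙α` and `⊢ α → β` then `β ∈ K⊙β`. -/
def StrictImprovement (od : L.Sentence → Set L.Sentence) : Prop :=
  ∀ α β, α ∈ od α → L.impl α β ∈ L.Cn ∅ → β ∈ od β

/-- N-persistence: if `¬β ∈ K⊙β` then `¬β ∈ K⊙α` for all `α`. -/
def NPersistence (od : L.Sentence → Set L.Sentence) : Prop :=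
  ∀ α β, L.neg β ∈ od β → L.neg β ∈ od α

/-- N-recovery: `K ⊆ (K⊙α) + ¬α`. -/
def NRecovery (K : Set L.Sentence) (od : L.Sentence → Set L.Sentence) : Prop :=
  ∀ α, K ⊆ L.expand (od α) (L.neg α)

/-- Disjunctive overlap: `K⊙α ∩ K⊙β ⊆ K⊙(α ∨ β)`. -/
def DisjunctiveOverlap (od : L.Sentence → Set L.Sentence) : Prop :=
  ∀ α β, od α ∩ od β ⊆ od (L.disj α β)

/-- Disjunctive inclusion: if `¬α ∉ K⊙(α ∨ β)` then `K⊙(α ∨ β) ⊆ K⊙α`. -/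
def DisjunctiveInclusion (od : L.Sentence → Set L.Sentence) : Prop :=
  ∀ α β, L.neg α ∉ od (L.disj α β) → od (L.disj α β) ⊆ od α

/-- Weak disjunctive inclusion: if `¬α ∉ K⊙(α ∨ β)` then
`(K⊙(α ∨ β)) + (α ∨ β) ⊆ (K⊙α) + α`. -/
def WeakDisjunctiveInclusion (od : L.Sentence → Set L.Sentence) : Prop :=
  ∀ α β, L.neg α ∉ od (L.disj α β) →
    L.expand (od (L.disj α β)) (L.disj α β) ⊆ L.expand (od α) α

/-! ### AGM revision and two level credibility-limited revision -/

/-- An AGM revision on `K`: postulates (⋆1)–(⋆8). -/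
def IsAGMRevision (K : Set L.Sentence) (star : L.Sentence → Set L.Sentence) : Prop :=
  (∀ α, star α = L.Cn (star α)) ∧
  (∀ α, α ∈ star α) ∧
  (∀ α, star α ⊆ L.expand K α) ∧
  (∀ α, L.neg α ∉ K → L.expand K α ⊆ star α) ∧
  (∀ α, L.Consistent {α} → L.Consistent (star α)) ∧
  (∀ α β, L.biimpl α β ∈ L.Cn ∅ → star α = star β) ∧
  (∀ α β, star α ∩ star β ⊆ star (L.disj α β)) ∧
  (∀ α β, L.neg α ∉ star (L.disj α β) → star (L.disj α β) ⊆ star α)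

/-- `od` is the two level CL revision operator induced by `star`, `CH`, `CL`:
`K⊙α = K⋆α` if `α ∈ C_H`; `K⊙α = (K⋆α) ∩ K` if `α ∈ C_L`;
`K⊙α = K` if `α ∉ C_H ∪ C_L`. -/
def IsTwoLevelCL (K : Set L.Sentence) (od star : L.Sentence → Set L.Sentence)
    (CH CL : Set L.Sentence) : Prop :=
  ∀ α, (α ∈ CH → od α = star α) ∧ (α ∈ CL → od α = star α ∩ K) ∧
    (α ∉ CH ∪ CL → od α = K)

/-- Credibility of logical equivalents. -/
def CredLogEquiv (C : Set L.Sentence) : Prop :=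
  ∀ α β, L.biimpl α β ∈ L.Cn ∅ → (α ∈ C ↔ β ∈ C)

/-- Single sentence closure. -/
def SingleSentenceClosure (C : Set L.Sentence) : Prop :=
  ∀ α ∈ C, L.Cn {α} ⊆ C

/-- Element consistency. -/
def ElementConsistency (C : Set L.Sentence) : Prop :=
  ∀ α ∈ C, L.Consistent {α}

/-- Credibility lower bounding (w.r.t. `K`). -/
def CredLowerBound (K C : Set L.Sentence) : Prop :=
  L.Consistent K → K ⊆ C

/-- Condition (C - ⋆): if `α ∉ C` and `β ∈ C` then `¬α ∈ K⋆β`. -/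
def CondCStar (K : Set L.Sentence) (star : L.Sentence → Set L.Sentence)
    (C : Set L.Sentence) : Prop :=
  ∀ α β, α ∉ C → β ∈ C → L.neg α ∈ star β

/-! ### Two level systems of spheres -/

/-- `(Si, S)` is a two level system of spheres centred on `‖K‖`. -/
def IsTwoLevelSystem (K : Set L.Sentence)
    (Si S : Set (Set (Set L.Sentence))) : Prop :=
  (∀ X ∈ S, ∀ M ∈ X, L.IsWorld M) ∧
  (∀ U ∈ S, ∀ V ∈ S, U ⊆ V ∨ V ⊆ U) ∧
  (∀ U ∈ Si, ∀ V ∈ Si, U ⊆ V ∨ V ⊆ U) ∧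
  L.worldsOf K ∈ S ∧ (∀ U ∈ S, L.worldsOf K ⊆ U) ∧
  L.worldsOf K ∈ Si ∧ (∀ U ∈ Si, L.worldsOf K ⊆ U) ∧
  (∀ α, (∃ U ∈ S, (U ∩ L.wS α).Nonempty) →
    ∃ U ∈ S, (U ∩ L.wS α).Nonempty ∧ ∀ V ∈ S, (V ∩ L.wS α).Nonempty → U ⊆ V) ∧
  (∀ α, (∃ U ∈ Si, (U ∩ L.wS α).Nonempty) →
    ∃ U ∈ Si, (U ∩ L.wS α).Nonempty ∧ ∀ V ∈ Si, (V ∩ L.wS α).Nonempty → U ⊆ V) ∧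
  Si ⊆ S ∧
  (∀ X ∈ Si, ∀ Y ∈ S, Y ∉ Si → X ⊆ Y)

/-- `od` is the system of spheres-based two level CL revision operator induced
by `(Si, S)` (centred on `‖K‖`): if `S_α` (the smallest sphere of `S` meeting
`‖α‖`) is in `Si` then `K⊙α = ⋂(S_α ∩ ‖α‖)`; if `S_α ∈ S \ Si` then
`K⊙α = ⋂(‖K‖ ∪ (S_α ∩ ‖α‖))`; and if no sphere of `S` meets `‖α‖` then
`K⊙α = K`. -/
def IsSphereRevision (K : Set L.Sentence)
    (Si S : Set (Set (Set L.Sentence)))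
    (od : L.Sentence → Set L.Sentence) : Prop :=
  ∀ α,
    (∀ Sa ∈ S, (Sa ∩ L.wS α).Nonempty →
      (∀ V ∈ S, (V ∩ L.wS α).Nonempty → Sa ⊆ V) →
      (Sa ∈ Si → od α = L.th (Sa ∩ L.wS α)) ∧
      (Sa ∉ Si → od α = L.th (L.worldsOf K ∪ (Sa ∩ L.wS α)))) ∧
    ((∀ X ∈ S, X ∩ L.wS α = ∅) → od α = K)

end PropLanguage

/-!
Write `Q(α)` for the sentences `δ` with `‖α‖ ⊆ ‖δ‖`. N-persistence carries `¬δ ∈ K⊙δ` down to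
`K⊙α`, so for `¬α ∉ K⊙α` every `δ ∈ Q(α)` has `‖K⊙δ‖ ∩ ‖δ‖ ≠ ∅`. If `S(α)` meets `‖β‖` at a world
of `‖K⊙δ‖`, disjunctive inclusion gives `K⊙(δ ∨ β) ⊆ K⊙β` with `δ ∨ β ∈ Q(α)`, so `S(α)` contains
`‖K⊙β‖`. If `S(α)` misses `‖β‖` and is not in `𝕊_i`, weak relative success provides `δ₀ ∈ Q(α)`
with `K⊙δ₀ ⊆ K` and `δ₀ ∉ K⊙δ₀`; strict improvement applied to `δ₀ ∨ β` then rules out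
`β ∈ K⊙β`, so `K⊙β ⊆ K`, and N-recovery gives `‖K⊙β‖ ∩ S(α) = ‖K‖`. Finally, a sphere of `𝕊`
meeting `‖α‖` is `‖K‖`, which lies in every `‖K⊙δ‖` by vacuity, or contains `‖K⊙α‖`, which
meets `‖α‖ ⊆ ‖δ‖` and so forces it to contain every `‖K⊙δ‖`.
-/

namespace PropLanguage

variable {L : PropLanguage}

structure IsValuation (L : PropLanguage) (v : L.Sentence → Bool) : Prop where
  falsum : v L.falsum = false
  neg : ∀ β, v (L.neg β) = !v β
  conj : ∀ β γ, v (L.conj β γ) = (v β && v γ)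
  disj : ∀ β γ, v (L.disj β γ) = (v β || v γ)
  impl : ∀ β γ, v (L.impl β γ) = (!v β || v γ)
  biimpl : ∀ β γ, v (L.biimpl β γ) = (v β == v γ)

section Logic

variable {A T M : Set L.Sentence} {φ ψ χ : L.Sentence}

lemma mem_cn_of_valuations
    (h : ∀ v, L.IsValuation v → (∀ β ∈ A, v β = true) → v χ = true) : χ ∈ L.Cn A :=
  L.cn_supraclassical A χ fun v h0 hn hc hd hi hb => h v ⟨h0, hn, hc, hd, hi, hb⟩

lemma mem_cn_of_mem_cn_of_valuations (hφ : φ ∈ L.Cn A)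
    (h : ∀ v, L.IsValuation v → v φ = true → v χ = true) : χ ∈ L.Cn A := by
  rw [← L.cn_iteration A]
  exact mem_cn_of_valuations fun v hv hA => h v hv (hA φ hφ)

lemma consistent_union_singleton (h : L.neg φ ∉ L.Cn A) : L.Consistent (A ∪ {φ}) := fun hc =>
  h <| mem_cn_of_mem_cn_of_valuations ((L.cn_deduction A φ _).mp hc) fun v hv => by
    simp [hv.impl, hv.neg, hv.falsum]

lemma exists_world_superset (h : L.Consistent A) : ∃ M, L.IsWorld M ∧ A ⊆ M := by
  have hchains : ∀ c ⊆ {B | L.Consistent B}, IsChain (· ⊆ ·) c → c.Nonempty →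
      ∃ ub ∈ {B | L.Consistent B}, ∀ s ∈ c, s ⊆ ub := by
    refine fun c hc hchain hne => ⟨⋃₀ c, fun hbot => ?_, fun _ => Set.subset_sUnion_of_mem⟩
    obtain ⟨F, hFc, hFfin, hF⟩ := L.cn_compact _ _ hbot
    obtain ⟨t, htc, hFt⟩ :=
      hchain.directedOn.exists_mem_subset_of_finite_of_subset_sUnion hne hFfin hFc
    exact hc htc (L.cn_monotony _ _ hFt hF)
  obtain ⟨M, hAM, hmax⟩ := zorn_subset_nonempty _ hchains A h
  exact ⟨M, ⟨hmax.prop, fun M' hM' hMM' => (hmax.eq_of_subset hM' hMM').symm⟩, hAM⟩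

lemma IsWorld.mem_of_consistent (hM : L.IsWorld M) (h : L.Consistent (M ∪ {φ})) : φ ∈ M := by
  rw [← hM.2 _ h Set.subset_union_left]
  exact Or.inr rfl

lemma IsWorld.mem_of_mem_cn (hM : L.IsWorld M) (h : φ ∈ L.Cn M) : φ ∈ M :=
  hM.mem_of_consistent fun hc => hM.1 <| by
    rw [← L.cn_iteration M]
    exact L.cn_monotony _ _ (Set.union_subset (L.cn_inclusion M) (by simpa using h)) hc

lemma IsWorld.neg_mem_iff (hM : L.IsWorld M) : L.neg φ ∈ M ↔ φ ∉ M := by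
  refine ⟨fun hn hφ => hM.1 (mem_cn_of_valuations fun v hv hA => ?_), fun hφ => ?_⟩
  · have := hA _ hn
    simp [hv.neg, hA _ hφ] at this
  · by_contra hn
    exact hφ (hM.mem_of_consistent (consistent_union_singleton (mt hM.mem_of_mem_cn hn)))

lemma IsWorld.disj_mem_iff (hM : L.IsWorld M) : L.disj φ ψ ∈ M ↔ φ ∈ M ∨ ψ ∈ M := by
  refine ⟨fun h => ?_, fun h => hM.mem_of_mem_cn (mem_cn_of_valuations fun v hv hA => ?_)⟩
  · by_contra! hφψ
    rw [← hM.neg_mem_iff, ← hM.neg_mem_iff] at hφψ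
    refine hM.1 (mem_cn_of_valuations fun v hv hA => ?_)
    have hd := hA _ h
    have hnφ := hA _ hφψ.1
    have hnψ := hA _ hφψ.2
    simp only [hv.disj, hv.neg, Bool.not_eq_true'] at hd hnφ hnψ
    simp [hnφ, hnψ] at hd
  · rcases h with h | h <;> simp [hv.disj, hA _ h]

lemma IsWorld.neg_disj_mem_iff (hM : L.IsWorld M) :
    L.neg (L.disj φ ψ) ∈ M ↔ L.neg φ ∈ M ∧ L.neg ψ ∈ M := by
  simp only [hM.neg_mem_iff, hM.disj_mem_iff, not_or]

lemma mem_cn_iff_forall_world : φ ∈ L.Cn A ↔ ∀ M ∈ L.worldsOf A, φ ∈ M := by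
  refine ⟨fun h M hM => hM.1.mem_of_mem_cn (L.cn_monotony _ _ hM.2 h), fun h => ?_⟩
  by_contra hφ
  have hnn : L.neg (L.neg φ) ∉ L.Cn A := fun hnn =>
    hφ (mem_cn_of_mem_cn_of_valuations hnn fun v hv => by simp [hv.neg])
  obtain ⟨M, hM, hAM⟩ := exists_world_superset (consistent_union_singleton hnn)
  exact hM.neg_mem_iff.mp (hAM (Or.inr rfl)) (h M ⟨hM, Set.subset_union_left.trans hAM⟩)

lemma mem_wS_iff : M ∈ L.wS φ ↔ L.IsWorld M ∧ φ ∈ M := by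
  refine ⟨fun hM => ⟨hM.1, hM.2 (L.cn_inclusion _ rfl)⟩, fun ⟨hM, hφ⟩ => ⟨hM, fun ψ hψ => ?_⟩⟩
  exact hM.mem_of_mem_cn (L.cn_monotony _ _ (by simpa using hφ) hψ)

lemma wS_disj : L.wS (L.disj φ ψ) = L.wS φ ∪ L.wS ψ := by
  ext M
  simp only [Set.mem_union, mem_wS_iff, ← and_or_left]
  exact and_congr_right fun hM => hM.disj_mem_iff

lemma wS_subset_wS_disj_left : L.wS φ ⊆ L.wS (L.disj φ ψ) :=
  wS_disj ▸ Set.subset_union_left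

lemma wS_subset_wS_disj_right : L.wS ψ ⊆ L.wS (L.disj φ ψ) :=
  wS_disj ▸ Set.subset_union_right

lemma worldsOf_anti (h : A ⊆ T) : L.worldsOf T ⊆ L.worldsOf A :=
  fun _ hM => ⟨hM.1, h.trans hM.2⟩

lemma worldsOf_subset_wS (h : φ ∈ T) : L.worldsOf T ⊆ L.wS φ :=
  fun _ hM => mem_wS_iff.mpr ⟨hM.1, hM.2 h⟩

lemma impl_mem_cn_empty_of_wS_subset (h : L.wS φ ⊆ L.wS ψ) : L.impl φ ψ ∈ L.Cn ∅ := by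
  refine (L.cn_deduction ∅ φ ψ).mp ?_
  rw [Set.empty_union, mem_cn_iff_forall_world]
  exact fun M hM => (mem_wS_iff.mp (h (mem_wS_iff.mpr ⟨hM.1, hM.2 rfl⟩))).2

lemma biimpl_disj_comm_mem_cn_empty : L.biimpl (L.disj φ ψ) (L.disj ψ φ) ∈ L.Cn ∅ :=
  mem_cn_of_valuations fun v hv _ => by simp [hv.biimpl, hv.disj, Bool.or_comm]

lemma Consistent.neg_notMem (hT : L.Consistent T) (hφ : φ ∈ T) : L.neg φ ∉ T := fun hn => by
  obtain ⟨M, hM, hTM⟩ := exists_world_superset hT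
  exact hM.neg_mem_iff.mp (hTM hn) (hTM hφ)

lemma IsBeliefSet.mem_iff (hT : L.IsBeliefSet T) : φ ∈ T ↔ ∀ M ∈ L.worldsOf T, φ ∈ M := by
  nth_rw 1 [hT]
  exact mem_cn_iff_forall_world

lemma IsBeliefSet.neg_notMem_iff (hT : L.IsBeliefSet T) :
    L.neg φ ∉ T ↔ (L.worldsOf T ∩ L.wS φ).Nonempty := by
  rw [hT.mem_iff]
  simp only [not_forall, exists_prop, Set.Nonempty, Set.mem_inter_iff, mem_wS_iff]
  exact exists_congr fun _ => ⟨fun ⟨hM, hn⟩ => ⟨hM, hM.1, not_not.mp (mt hM.1.neg_mem_iff.mpr hn)⟩,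
    fun ⟨hM, _, hφ⟩ => ⟨hM, fun hn => hM.1.neg_mem_iff.mp hn hφ⟩⟩

lemma IsBeliefSet.mem_of_disj_mem_of_neg_mem (hT : L.IsBeliefSet T) (h : L.disj φ ψ ∈ T)
    (hψ : L.neg ψ ∈ T) : φ ∈ T :=
  hT.mem_iff.mpr fun _ hM =>
    (hM.1.disj_mem_iff.mp (hM.2 h)).resolve_right (hM.1.neg_mem_iff.mp (hM.2 hψ))

lemma IsBeliefSet.neg_disj_mem_iff (hT : L.IsBeliefSet T) :
    L.neg (L.disj φ ψ) ∈ T ↔ L.neg φ ∈ T ∧ L.neg ψ ∈ T := by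
  simp only [hT.mem_iff]
  exact ⟨fun h => ⟨fun M hM => (hM.1.neg_disj_mem_iff.mp (h M hM)).1,
    fun M hM => (hM.1.neg_disj_mem_iff.mp (h M hM)).2⟩,
    fun h M hM => hM.1.neg_disj_mem_iff.mpr ⟨h.1 M hM, h.2 M hM⟩⟩

end Logic

section Revision

-- `S(α)`, `𝕊_i` and `𝕊` of the statement.
def sphereOf (od : L.Sentence → Set L.Sentence) (α : L.Sentence) : Set (Set L.Sentence) :=
  {w | ∃ δ, L.wS α ⊆ L.wS δ ∧ w ∈ L.worldsOf (od δ)}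

def innerSpheres (K : Set L.Sentence) (od : L.Sentence → Set L.Sentence) :
    Set (Set (Set L.Sentence)) :=
  {Sp | Sp = L.worldsOf K ∨
    (Sp.Nonempty ∧
     Sp ⊆ {w | ∃ α, w ∈ L.worldsOf (od α) ∧ L.worldsOf (od α) ⊆ L.wS α} ∧
     ∀ α, (Sp ∩ L.wS α).Nonempty → L.worldsOf (od α) ⊆ Sp)}

def spheres (K : Set L.Sentence) (od : L.Sentence → Set L.Sentence) :
    Set (Set (Set L.Sentence)) :=
  {Sp | Sp = L.worldsOf K ∨
    (Sp.Nonempty ∧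
     Sp ⊆ {w | ∃ α, w ∈ L.worldsOf (od α) ∧ (L.worldsOf (od α) ∩ L.wS α).Nonempty} ∧
     (∀ α, (Sp ∩ L.wS α).Nonempty → L.worldsOf (od α) ⊆ Sp) ∧
     (∀ α, Sp ∩ L.wS α = ∅ → Sp ∉ innerSpheres K od →
        L.worldsOf (od α) ∩ Sp = L.worldsOf K))}

variable {K : Set L.Sentence} {od : L.Sentence → Set L.Sentence} {α β δ : L.Sentence}

lemma Closure.isBeliefSet (hcl : L.Closure od) (α : L.Sentence) : L.IsBeliefSet (od α) :=
  hcl α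

lemma neg_notMem_od_of_wS_subset (hcl : L.Closure od) (hnp : L.NPersistence od)
    (hα : L.neg α ∉ od α) (hαδ : L.wS α ⊆ L.wS δ) : L.neg δ ∉ od δ := by
  intro hδ
  apply hα
  by_contra h
  obtain ⟨M, hM, hMα⟩ := (hcl.isBeliefSet α).neg_notMem_iff.mp h
  exact hM.1.neg_mem_iff.mp (hM.2 (hnp α δ hδ)) (mem_wS_iff.mp (hαδ hMα)).2

lemma od_disj_subset_right (hcl : L.Closure od) (hext : L.Extensionality od)
    (hnp : L.NPersistence od) (hdi : L.DisjunctiveInclusion od) {M : Set L.Sentence}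
    (hδ : L.neg δ ∉ od δ) (hM : M ∈ L.worldsOf (od δ)) (hβ : β ∈ M) :
    od (L.disj δ β) ⊆ od β := by
  have hcomm : od (L.disj δ β) = od (L.disj β δ) := hext _ _ biimpl_disj_comm_mem_cn_empty
  suffices hnβ : L.neg β ∉ od (L.disj δ β) by
    rw [hcomm] at hnβ ⊢
    exact hdi β δ hnβ
  intro hnβ
  by_cases hnδ : L.neg δ ∈ od (L.disj δ β)
  · have := hnp δ _ ((hcl.isBeliefSet _).neg_disj_mem_iff.mpr ⟨hnδ, hnβ⟩)
    exact hδ ((hcl.isBeliefSet δ).neg_disj_mem_iff.mp this).1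
  · exact hM.1.neg_mem_iff.mp (hM.2 (hdi δ β hnδ hnβ)) hβ

lemma sphereOf_inter_wS_nonempty (hcl : L.Closure od) (hα : L.neg α ∉ od α) :
    (sphereOf od α ∩ L.wS α).Nonempty :=
  let ⟨M, hM, hMα⟩ := (hcl.isBeliefSet α).neg_notMem_iff.mp hα
  ⟨M, ⟨α, subset_rfl, hM⟩, hMα⟩

lemma worldsOf_subset_sphereOf (hcl : L.Closure od) (hext : L.Extensionality od)
    (hnp : L.NPersistence od) (hdi : L.DisjunctiveInclusion od) (hα : L.neg α ∉ od α)
    (hβ : (sphereOf od α ∩ L.wS β).Nonempty) : L.worldsOf (od β) ⊆ sphereOf od α := by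
  obtain ⟨M, ⟨δ, hαδ, hM⟩, hMβ⟩ := hβ
  have hsub := od_disj_subset_right hcl hext hnp hdi
    (neg_notMem_od_of_wS_subset hcl hnp hα hαδ) hM (mem_wS_iff.mp hMβ).2
  exact fun w hw => ⟨L.disj δ β, hαδ.trans wS_subset_wS_disj_left, worldsOf_anti hsub hw⟩

lemma sphereOf_mem_innerSpheres (hcl : L.Closure od) (hext : L.Extensionality od)
    (hnp : L.NPersistence od) (hdi : L.DisjunctiveInclusion od) (hα : L.neg α ∉ od α)
    (hself : ∀ δ, L.wS α ⊆ L.wS δ → δ ∈ od δ) : sphereOf od α ∈ innerSpheres K od :=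
  Or.inr ⟨(sphereOf_inter_wS_nonempty hcl hα).mono Set.inter_subset_left,
    fun _ ⟨δ, hαδ, hw⟩ => ⟨δ, hw, worldsOf_subset_wS (hself δ hαδ)⟩,
    fun _ => worldsOf_subset_sphereOf hcl hext hnp hdi hα⟩

lemma notMem_od_self_of_neg_mem_od_disj (hcl : L.Closure od)
    (hcons : ∀ α, L.Consistent (od α)) (hsi : L.StrictImprovement od)
    (hdi : L.DisjunctiveInclusion od) (hδ : δ ∉ od δ) (hnβ : L.neg β ∈ od (L.disj δ β)) :
    β ∉ od β := by
  intro hβ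
  have hdisj : L.disj δ β ∈ od (L.disj δ β) :=
    hsi β _ hβ (impl_mem_cn_empty_of_wS_subset wS_subset_wS_disj_right)
  have hδ' : δ ∈ od (L.disj δ β) := (hcl.isBeliefSet _).mem_of_disj_mem_of_neg_mem hdisj hnβ
  exact hδ (hdi δ β ((hcons _).neg_notMem hδ') hδ')

lemma worldsOf_inter_sphereOf_eq (hwrs : L.WeakRelativeSuccess K od) (hcl : L.Closure od)
    (hcons : ∀ α, L.Consistent (od α)) (hext : L.Extensionality od)
    (hsi : L.StrictImprovement od) (hnp : L.NPersistence od) (hnr : L.NRecovery K od)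
    (hdi : L.DisjunctiveInclusion od) (hα : L.neg α ∉ od α)
    (hβ : sphereOf od α ∩ L.wS β = ∅) (hnotin : sphereOf od α ∉ innerSpheres K od) :
    L.worldsOf (od β) ∩ sphereOf od α = L.worldsOf K := by
  obtain ⟨δ₀, hαδ₀, hδ₀K, hδ₀⟩ : ∃ δ₀, L.wS α ⊆ L.wS δ₀ ∧ od δ₀ ⊆ K ∧ δ₀ ∉ od δ₀ := by
    by_contra! h
    exact hnotin (sphereOf_mem_innerSpheres hcl hext hnp hdi hα
      fun δ hαδ => (hwrs δ).elim id (h δ hαδ))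
  have hnβ : ∀ δ, L.wS α ⊆ L.wS δ → L.neg β ∈ od δ := fun δ hαδ => by
    by_contra h
    obtain ⟨M, hM, hMβ⟩ := (hcl.isBeliefSet δ).neg_notMem_iff.mp h
    exact Set.eq_empty_iff_forall_notMem.mp hβ M ⟨⟨δ, hαδ, hM⟩, hMβ⟩
  have hβK : od β ⊆ K := (hwrs β).resolve_left <| notMem_od_self_of_neg_mem_od_disj hcl hcons
    hsi hdi hδ₀ (hnβ _ (hαδ₀.trans wS_subset_wS_disj_left))
  refine Set.Subset.antisymm ?_ fun w hw => ⟨worldsOf_anti hβK hw, δ₀, hαδ₀, worldsOf_anti hδ₀K hw⟩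
  rintro w ⟨hwβ, δ, hαδ, hwδ⟩
  refine ⟨hwδ.1, fun φ hφ => hwδ.1.mem_of_mem_cn (L.cn_monotony _ _ ?_ (hnr β hφ))⟩
  exact Set.union_subset hwβ.2 (Set.singleton_subset_iff.mpr (hwδ.2 (hnβ δ hαδ)))

lemma sphereOf_mem_spheres (hwrs : L.WeakRelativeSuccess K od) (hcl : L.Closure od)
    (hcons : ∀ α, L.Consistent (od α)) (hext : L.Extensionality od)
    (hsi : L.StrictImprovement od) (hnp : L.NPersistence od) (hnr : L.NRecovery K od)
    (hdi : L.DisjunctiveInclusion od) (hα : L.neg α ∉ od α) :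
    sphereOf od α ∈ spheres K od :=
  Or.inr ⟨(sphereOf_inter_wS_nonempty hcl hα).mono Set.inter_subset_left,
    fun _ ⟨δ, hαδ, hw⟩ => ⟨δ, hw,
      (hcl.isBeliefSet δ).neg_notMem_iff.mp (neg_notMem_od_of_wS_subset hcl hnp hα hαδ)⟩,
    fun _ => worldsOf_subset_sphereOf hcl hext hnp hdi hα,
    fun _ => worldsOf_inter_sphereOf_eq hwrs hcl hcons hext hsi hnp hnr hdi hα⟩

lemma sphereOf_subset_of_mem_spheres (hcl : L.Closure od) (hvac : L.Vacuity K od)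
    (hα : L.neg α ∉ od α) {V : Set (Set L.Sentence)} (hV : V ∈ spheres K od)
    (hVα : (V ∩ L.wS α).Nonempty) : sphereOf od α ⊆ V := by
  rintro w ⟨δ, hαδ, hw⟩
  rcases hV with rfl | ⟨-, -, hsub, -⟩
  · obtain ⟨M, hMK, hMα⟩ := hVα
    have hδK : L.neg δ ∉ K := fun h =>
      hMK.1.neg_mem_iff.mp (hMK.2 h) (mem_wS_iff.mp (hαδ hMα)).2
    exact worldsOf_anti ((Set.subset_union_left.trans (L.cn_inclusion _)).trans (hvac δ hδK)) hw
  · obtain ⟨M, hM, hMα⟩ := (hcl.isBeliefSet α).neg_notMem_iff.mp hα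
    exact hsub δ ⟨M, hsub α hVα hM, hαδ hMα⟩ hw

end Revision

end PropLanguage

open PropLanguage in
theorem constructed_min_sphere_general
    (L : PropLanguage) (K : Set L.Sentence)
    (hKcons : L.Consistent K)
    (od : L.Sentence → Set L.Sentence)
    (h1 : L.WeakRelativeSuccess K od) (h2 : L.Closure od)
    (h4 : L.ConsistencyPreservation K od)
    (h5 : L.Vacuity K od) (h6 : L.Extensionality od)
    (h7 : L.StrictImprovement od) (h8 : L.NPersistence od)
    (h9 : L.NRecovery K od)
    (h11 : L.DisjunctiveInclusion od)
    (Si S : Set (Set (Set L.Sentence)))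
    (hSi : Si = {Sp | Sp = L.worldsOf K ∨
      (Sp.Nonempty ∧
       Sp ⊆ {w | ∃ α, w ∈ L.worldsOf (od α) ∧ L.worldsOf (od α) ⊆ L.wS α} ∧
       ∀ α, (Sp ∩ L.wS α).Nonempty → L.worldsOf (od α) ⊆ Sp)})
    (hS : S = {Sp | Sp = L.worldsOf K ∨
      (Sp.Nonempty ∧
       Sp ⊆ {w | ∃ α, w ∈ L.worldsOf (od α) ∧
                      (L.worldsOf (od α) ∩ L.wS α).Nonempty} ∧
       (∀ α, (Sp ∩ L.wS α).Nonempty → L.worldsOf (od α) ⊆ Sp) ∧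
       (∀ α, Sp ∩ L.wS α = ∅ → Sp ∉ Si →
          L.worldsOf (od α) ∩ Sp = L.worldsOf K))}) :
    ∀ α, L.neg α ∉ od α →
      ∀ Sa : Set (Set L.Sentence),
        Sa = {w | ∃ δ, L.wS α ⊆ L.wS δ ∧ w ∈ L.worldsOf (od δ)} →
        Sa ∈ S ∧ (Sa ∩ L.wS α).Nonempty ∧
        ∀ V ∈ S, (V ∩ L.wS α).Nonempty → Sa ⊆ V := by
  intro α hα Sa hSa
  subst hSa hSi hS
  exact ⟨sphereOf_mem_spheres h1 h2 (h4 hKcons) h6 h7 h8 h9 h11 hα,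
    sphereOf_inter_wS_nonempty h2 hα, fun V hV => sphereOf_subset_of_mem_spheres h2 h5 hα hV⟩

open PropLanguage in
/-- for the constructed collection `S` and any `α` with
`¬α ∉ K⊙α`, the set `S(α) = ⋃{‖K⊙δ‖ : ‖α‖ ⊆ ‖δ‖}` belongs to `S` and is the
`⊆`-smallest member of `S` intersecting `‖α‖`. -/
theorem constructed_min_sphere
    (L : PropLanguage) (K : Set L.Sentence)
    (hK : L.IsBeliefSet K) (hKcons : L.Consistent K)
    (od : L.Sentence → Set L.Sentence)
    (h1 : L.WeakRelativeSuccess K od) (h2 : L.Closure od)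
    (h3 : L.Inclusion K od) (h4 : L.ConsistencyPreservation K od)
    (h5 : L.Vacuity K od) (h6 : L.Extensionality od)
    (h7 : L.StrictImprovement od) (h8 : L.NPersistence od)
    (h9 : L.NRecovery K od) (h10 : L.DisjunctiveOverlap od)
    (h11 : L.DisjunctiveInclusion od)
    (Si S : Set (Set (Set L.Sentence)))
    (hSi : Si = {Sp | Sp = L.worldsOf K ∨
      (Sp.Nonempty ∧
       Sp ⊆ {w | ∃ α, w ∈ L.worldsOf (od α) ∧ L.worldsOf (od α) ⊆ L.wS α} ∧
       ∀ α, (Sp ∩ L.wS α).Nonempty → L.worldsOf (od α) ⊆ Sp)})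
    (hS : S = {Sp | Sp = L.worldsOf K ∨
      (Sp.Nonempty ∧
       Sp ⊆ {w | ∃ α, w ∈ L.worldsOf (od α) ∧
                      (L.worldsOf (od α) ∩ L.wS α).Nonempty} ∧
       (∀ α, (Sp ∩ L.wS α).Nonempty → L.worldsOf (od α) ⊆ Sp) ∧
       (∀ α, Sp ∩ L.wS α = ∅ → Sp ∉ Si →
          L.worldsOf (od α) ∩ Sp = L.worldsOf K))}) :
    ∀ α, L.neg α ∉ od α →
      ∀ Sa : Set (Set L.Sentence),
        Sa = {w | ∃ δ, L.wS α ⊆ L.wS δ ∧ w ∈ L.worldsOf (od δ)} →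
        Sa ∈ S ∧ (Sa ∩ L.wS α).Nonempty ∧
        ∀ V ∈ S, (V ∩ L.wS α).Nonempty → Sa ⊆ V :=
  constructed_min_sphere_general L K hKcons od h1 h2 h4 h5 h6 h7 h8 h9 h11 Si S hSi hS
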